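/- arXiv:1703.04281 — 4 statements merged into one kernel-verified Lean document; each statement's English description precedes it below -/
import Mathlib

section
/- Let m ≥ 1 and let x1, x2 ∈ {0,1}^m be strings of length m such that for some position i (1 ≤ i ≤ m) we have x1[i] = 1 and x2[i] = 0. Then, setting y = 0^{i-1}, the string 2^m x1 y belongs to END while the string 2^m x2 y does not belong to END. -/
/-- The language `END ⊆ {0,1,2}^*`: strings containing at least one symbol `2`
whose reverse has the symbol `1` at (1-based) position `|w|₂` (the number of `2`s in `w`). -/
def LangEND : Set (List (Fin 3)) :=
  {w | 1 ≤ w.count 2 ∧ w.reverse.getD (w.count 2 - 1) 0 = 1}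


lemma key (x : List (Fin 3)) (m i : ℕ)
    (hlen : x.length = m) (hx : ∀ a ∈ x, a = 0 ∨ a = 1)
    (hi1 : 1 ≤ i) (him : i ≤ m) :
    (List.replicate m (2 : Fin 3) ++ x ++ List.replicate (i - 1) 0).count 2 = m ∧
    (List.replicate m (2 : Fin 3) ++ x ++ List.replicate (i - 1) 0).reverse.getD (m - 1) 0
      = x.getD (i - 1) 0 := by
  have hc : x.count 2 = 0 := by
    rw [List.count_eq_zero]
    intro h
    rcases hx 2 h with h | h <;> simp at h
  constructor
  · simp [List.count_append, hc, List.count_replicate]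
  · rw [List.reverse_append, List.reverse_append, List.reverse_replicate,
      List.reverse_replicate]
    rw [List.getD_append_right _ _ _ _ (by simp [Nat.sub_le_iff_le_add]; omega)]
    rw [List.getD_append _ _ _ _ (by simp; omega)]
    simp only [List.length_replicate]
    have hmi : m - 1 - (i - 1) = m - i := by omega
    rw [hmi]
    rcases Nat.lt_or_ge (i-1) x.length with h | h
    · rw [List.getD_eq_getElem _ _ (by simp [hlen]; omega), List.getD_eq_getElem _ _ h,
        List.getElem_reverse]
      congr 1
      simp only [List.length_reverse, hlen]
      omega
    · omega

theorem stmt_2 (m : ℕ) (hm : 1 ≤ m) (x1 x2 : List (Fin 3))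
    (hx1len : x1.length = m) (hx2len : x2.length = m)
    (hx1 : ∀ a ∈ x1, a = 0 ∨ a = 1) (hx2 : ∀ a ∈ x2, a = 0 ∨ a = 1)
    (i : ℕ) (hi1 : 1 ≤ i) (him : i ≤ m)
    (hxi1 : x1.getD (i - 1) 0 = 1) (hxi2 : x2.getD (i - 1) 0 = 0) :
    (List.replicate m (2 : Fin 3) ++ x1 ++ List.replicate (i - 1) 0) ∈ LangEND ∧
    (List.replicate m (2 : Fin 3) ++ x2 ++ List.replicate (i - 1) 0) ∉ LangEND := by
  obtain ⟨hc1, hg1⟩ := key x1 m i hx1len hx1 hi1 him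
  obtain ⟨hc2, hg2⟩ := key x2 m i hx2len hx2 hi1 him
  constructor
  · exact ⟨by rw [hc1]; exact hm, by rw [hc1, hg1]; exact hxi1⟩
  · intro ⟨_, h⟩
    rw [hc2, hg2, hxi2] at h
    exact absurd h (by decide)
end

section
/- Let u = u[1]u[2]⋯u[n] ∈ {1,2}^* and let v = M_{u[n]} ⋯ M_{u[2]} M_{u[1]} v_0 ∈ ℝ^5, where v_0 = (0,0,1,0,0)^T. Then the first entry of v equals e(u), the second entry equals e(u^r), the third entry equals 3^{|u|}, the fourth entry equals 0, and the sum of all five entries of v equals 1. -/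
/-- Base-3 encoding of a string over `{1,2}` (a symbol `d : Fin 2` represents the
digit `d + 1`): `e(ε) = 0` and `e(u·d) = 3·e(u) + d` for `d ∈ {1,2}`. -/
def enc (u : List (Fin 2)) : ℕ :=
  u.foldl (fun acc d => 3 * acc + (d.val + 1)) 0

/-- The affine transition matrix `M_1` for the symbol `1`. -/
def M1 : Matrix (Fin 5) (Fin 5) ℝ :=
  !![4, 1, 1, 1, 1;
     0, 1, 1, 0, 0;
     0, 0, 3, 0, 0;
     0, 0, 0, 1, 0;
     -3, -1, -4, -1, 0]

/-- The affine transition matrix `M_2` for the symbol `2`. -/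
def M2 : Matrix (Fin 5) (Fin 5) ℝ :=
  !![5, 2, 2, 2, 2;
     0, 1, 2, 0, 0;
     0, 0, 3, 0, 0;
     0, 0, 0, 1, 0;
     -4, -2, -6, -2, -1]

/-- The transition matrix associated with a symbol of `{1,2}`. -/
def Msym (d : Fin 2) : Matrix (Fin 5) (Fin 5) ℝ := if d = 0 then M1 else M2

/-- `applyStr u v = M_{u[n]} ⋯ M_{u[2]} M_{u[1]} v`. -/
def applyStr (u : List (Fin 2)) (v : Fin 5 → ℝ) : Fin 5 → ℝ :=
  u.foldl (fun w d => (Msym d).mulVec w) v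

lemma enc_foldl (w : List (Fin 2)) : ∀ a : ℕ,
    w.foldl (fun acc d => 3 * acc + (d.val + 1)) a = a * 3 ^ w.length + enc w := by
  induction w with
  | nil => intro a; simp [enc]
  | cons d t ih =>
      intro a
      simp only [List.foldl_cons, List.length_cons, enc]
      rw [ih, ih (3 * 0 + (d.val + 1))]
      ring

lemma enc_cons (d : Fin 2) (w : List (Fin 2)) :
    enc (d :: w) = (d.val + 1) * 3 ^ w.length + enc w := by
  have := enc_foldl w (3 * 0 + (d.val + 1))
  simpa [enc] using this

lemma enc_append (u : List (Fin 2)) (d : Fin 2) :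
    enc (u ++ [d]) = 3 * enc u + (d.val + 1) := by
  simp [enc, List.foldl_append]

lemma M1_mulVec (v : Fin 5 → ℝ) : M1.mulVec v =
    ![4*v 0 + v 1 + v 2 + v 3 + v 4, v 1 + v 2, 3*v 2, v 3,
      -3*v 0 - v 1 - 4*v 2 - v 3] := by
  funext i
  fin_cases i <;>
    (simp [M1, Matrix.mulVec, dotProduct, Fin.sum_univ_five]; try ring; try tauto)

lemma M2_mulVec (v : Fin 5 → ℝ) : M2.mulVec v =
    ![5*v 0 + 2*v 1 + 2*v 2 + 2*v 3 + 2*v 4, v 1 + 2*v 2, 3*v 2, v 3,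
      -4*v 0 - 2*v 1 - 6*v 2 - 2*v 3 - v 4] := by
  funext i
  fin_cases i <;>
    (simp [M2, Matrix.mulVec, dotProduct, Fin.sum_univ_five]; try ring; try tauto)

lemma Msym_mulVec (d : Fin 2) (v : Fin 5 → ℝ) : (Msym d).mulVec v =
    ![(4 + (d.val : ℝ)) * v 0 + (1 + (d.val : ℝ)) * (v 1 + v 2 + v 3 + v 4),
      v 1 + (1 + (d.val : ℝ)) * v 2, 3 * v 2, v 3,
      (-3 - (d.val : ℝ)) * v 0 + (-1 - (d.val : ℝ)) * (v 1 + v 3)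
        + (-4 - 2 * (d.val : ℝ)) * v 2 - (d.val : ℝ) * v 4] := by
  fin_cases d <;> funext i <;> fin_cases i <;>
    (simp [Msym, M1, M2, Matrix.mulVec, dotProduct, Fin.sum_univ_five]; try ring; try tauto)

theorem stmt_8 (u : List (Fin 2)) :
    (applyStr u ![0, 0, 1, 0, 0]) 0 = (enc u : ℝ) ∧
    (applyStr u ![0, 0, 1, 0, 0]) 1 = (enc u.reverse : ℝ) ∧
    (applyStr u ![0, 0, 1, 0, 0]) 2 = 3 ^ u.length ∧
    (applyStr u ![0, 0, 1, 0, 0]) 3 = 0 ∧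
    (∑ i : Fin 5, (applyStr u ![0, 0, 1, 0, 0]) i) = 1 := by
  induction u using List.reverseRecOn with
  | nil => simp [applyStr, enc, Fin.sum_univ_five]
  | append_singleton t d ih =>
      obtain ⟨h0, h1, h2, h3, hsum⟩ := ih
      set v := applyStr t ![0, 0, 1, 0, 0] with hv
      have happ : applyStr (t ++ [d]) ![0, 0, 1, 0, 0] = (Msym d).mulVec v := by
        rw [hv]; simp [applyStr, List.foldl_append]
      have h4 : v 4 = 1 - v 0 - v 1 - v 2 - v 3 := by
        rw [Fin.sum_univ_five] at hsum; linarith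
      have hre : ((t ++ [d]).reverse : List (Fin 2)) = d :: t.reverse := by simp
      have hencr : (enc (d :: t.reverse) : ℝ)
          = ((d.val : ℝ) + 1) * 3 ^ t.length + enc t.reverse := by
        rw [enc_cons]; push_cast [List.length_reverse]; ring
      have henc : (enc (t ++ [d]) : ℝ) = 3 * enc t + ((d.val : ℝ) + 1) := by
        rw [enc_append]; push_cast; ring
      rw [happ, hre, hencr, henc, Msym_mulVec]
      refine ⟨?_, ?_, ?_, ?_, ?_⟩ <;>
        simp [Fin.sum_univ_five, h0, h1, h2, h3, h4, List.length_append] <;> ring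
end

section
/- Let x, y ∈ {1,2}^* and let k be a real number. Writing P(u) = M_{u[n]} ⋯ M_{u[1]} for the left-to-right product of transition matrices along a string u ∈ {1,2}^* (with P(ε) the identity), the vector v_f = M_$(k) · P(y) · M_0 · P(x) · (0,0,1,0,0)^T ∈ ℝ^5 equals (k(e(y) − e(y^r)), −k(e(y) − e(y^r)), k(e(x) − e(x^r)), −k(e(x) − e(x^r)), 1)^T. -/
/-- The affine transition matrix `M_0` for the symbol `0`. -/
def M0 : Matrix (Fin 5) (Fin 5) ℝ :=
  !![0, 0, 0, 0, 0;
     0, 0, 0, 0, 0;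
     1, 1, 1, 1, 1;
     1, -1, 0, 0, 0;
     -1, 1, 0, 0, 0]

/-- The affine transition matrix `M_$(k)` for the right end-marker. -/
def Mdollar (k : ℝ) : Matrix (Fin 5) (Fin 5) ℝ :=
  !![k, -k, 0, 0, 0;
     -k, k, 0, 0, 0;
     0, 0, 0, k, 0;
     0, 0, 0, -k, 0;
     1, 1, 1, 1, 1]

lemma enc_aux (u : List (Fin 2)) (n : ℕ) :
    u.foldl (fun acc d => 3 * acc + (d.val + 1)) n = n * 3 ^ u.length + enc u := by
  induction u generalizing n with
  | nil => simp [enc]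
  | cons a u ih =>
    show u.foldl _ (3 * n + (a.val + 1)) = _
    rw [ih]
    show _ = n * 3 ^ (u.length + 1) + u.foldl _ (3 * 0 + (a.val + 1))
    rw [ih]
    ring

lemma enc_cons_s9 (a : Fin 2) (u : List (Fin 2)) :
    enc (a :: u) = (a.val + 1) * 3 ^ u.length + enc u := by
  have := enc_aux u (3 * 0 + (a.val + 1))
  simpa [enc] using this

lemma enc_append_singleton (u : List (Fin 2)) (a : Fin 2) :
    enc (u ++ [a]) = 3 * enc u + (a.val + 1) := by
  simp [enc, List.foldl_append]

lemma applyStr_append_singleton (u : List (Fin 2)) (a : Fin 2) (v : Fin 5 → ℝ) :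
    applyStr (u ++ [a]) v = (Msym a).mulVec (applyStr u v) := by
  simp [applyStr, List.foldl_append]

set_option maxRecDepth 8000 in
lemma key_s9 (u : List (Fin 2)) (d : ℝ) :
    applyStr u ![0, 0, 1, d, -d] =
      ![(enc u : ℝ), (enc u.reverse : ℝ), 3 ^ u.length, d,
        1 - (enc u : ℝ) - (enc u.reverse : ℝ) - 3 ^ u.length - d] := by
  induction u using List.reverseRecOn with
  | nil =>
    funext i
    fin_cases i <;> norm_num [applyStr, enc]
  | append_singleton u a ih =>
    rw [applyStr_append_singleton, ih]
    have h1 : ∀ b : Fin 2, (enc (u ++ [b]) : ℝ) = 3 * enc u + (b.val + 1) := by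
      intro b; rw [enc_append_singleton]; push_cast; ring
    have h2 : ∀ b : Fin 2, (enc (b :: u.reverse) : ℝ)
        = (b.val + 1) * 3 ^ u.length + enc u.reverse := by
      intro b; rw [enc_cons_s9, List.length_reverse]; push_cast; ring
    have h10 := h1 0; have h11 := h1 1; have h20 := h2 0; have h21 := h2 1
    norm_num at h10 h11 h20 h21
    fin_cases a <;>
      · funext i
        fin_cases i <;>
          · simp [Msym, M1, M2, Matrix.mulVec, dotProduct, Fin.sum_univ_five,
              pow_succ]
            try linarith

theorem stmt_9 (x y : List (Fin 2)) (k : ℝ) :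
    (Mdollar k).mulVec (applyStr y (M0.mulVec (applyStr x ![0, 0, 1, 0, 0]))) =
      ![k * ((enc y : ℝ) - (enc y.reverse : ℝ)),
        -(k * ((enc y : ℝ) - (enc y.reverse : ℝ))),
        k * ((enc x : ℝ) - (enc x.reverse : ℝ)),
        -(k * ((enc x : ℝ) - (enc x.reverse : ℝ))),
        1] := by
  have hx := key_s9 x 0
  have hx' : applyStr x ![0, 0, 1, 0, 0] =
      ![(enc x : ℝ), (enc x.reverse : ℝ), 3 ^ x.length, 0,
        1 - (enc x : ℝ) - (enc x.reverse : ℝ) - 3 ^ x.length - 0] := by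
    rw [← hx]; funext i; fin_cases i <;> simp
  rw [hx']
  have hM0 : M0.mulVec ![(enc x : ℝ), (enc x.reverse : ℝ), 3 ^ x.length, 0,
        1 - (enc x : ℝ) - (enc x.reverse : ℝ) - 3 ^ x.length - 0] =
      ![0, 0, 1, (enc x : ℝ) - (enc x.reverse : ℝ), -((enc x : ℝ) - (enc x.reverse : ℝ))] := by
    funext i
    fin_cases i <;>
      · simp [M0, Matrix.mulVec, dotProduct, Fin.sum_univ_five]
        try ring
  rw [hM0, key_s9 y ((enc x : ℝ) - (enc x.reverse : ℝ))]
  funext i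
  fin_cases i <;>
    · simp [Mdollar, Matrix.mulVec, dotProduct, Fin.sum_univ_five]
      try ring
end

section
/- Let t, z ≥ 1 and let w_1, …, w_t and w'_1, …, w'_z be strings over {1,2}. Then the string w_1 0 w_2 0 ⋯ 0 w_t 3 w'_z 0 ⋯ 0 w'_2 0 w'_1 belongs to MANYTWINS if and only if t = z and w_i = w'_i for every i with 1 ≤ i ≤ t. -/
/-- `joinZero [w₁, …, w_t] = w₁ 0 w₂ 0 ⋯ 0 w_t`: concatenation with the
separator symbol `0` in between. -/
def joinZero : List (List (Fin 4)) → List (Fin 4)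
  | [] => []
  | [w] => w
  | w :: ws => w ++ [0] ++ joinZero ws

/-- `TWIN(t) = { w₁ 0 w₂ 0 ⋯ 0 w_t 3 w_t 0 ⋯ 0 w₂ 0 w₁ : wᵢ ∈ {1,2}^* }`. -/
def TWIN (t : ℕ) : Set (List (Fin 4)) :=
  {s | ∃ ws : List (List (Fin 4)), ws.length = t ∧
        (∀ w ∈ ws, ∀ a ∈ w, a = 1 ∨ a = 2) ∧
        s = joinZero ws ++ [3] ++ joinZero ws.reverse}

/-- `MANYTWINS = ⋃_{t ≥ 1} TWIN(t)`. -/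
def MANYTWINS : Set (List (Fin 4)) :=
  {s | ∃ t : ℕ, 1 ≤ t ∧ s ∈ TWIN t}

/-! A string of `MANYTWINS` contains exactly one `3`, so it splits uniquely at it, and each half
is the `0`-intercalation of a nonempty list of `0`-free words, which `List.splitOn 0` recovers. -/

theorem joinZero_eq_intercalate : ∀ ws : List (List (Fin 4)), joinZero ws = [0].intercalate ws
  | [] => rfl
  | [_] => List.intercalate_singleton.symm
  | w :: w' :: ws => by
    simp only [joinZero, joinZero_eq_intercalate (w' :: ws), List.intercalate_cons_cons]

theorem notMem_joinZero {x : Fin 4} (hx : x ≠ 0) :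
    ∀ {ws : List (List (Fin 4))}, (∀ w ∈ ws, x ∉ w) → x ∉ joinZero ws
  | [], _ => List.not_mem_nil
  | [w], h => h w List.mem_cons_self
  | w :: w' :: ws, h => by
    have hw : x ∉ w := h w List.mem_cons_self
    have hws : x ∉ joinZero (w' :: ws) :=
      notMem_joinZero hx fun v hv => h v (List.mem_cons_of_mem w hv)
    simp_all [joinZero]

theorem joinZero_inj {ws vs : List (List (Fin 4))} (hws : ws ≠ []) (hvs : vs ≠ [])
    (hws0 : ∀ w ∈ ws, 0 ∉ w) (hvs0 : ∀ v ∈ vs, 0 ∉ v) (h : joinZero ws = joinZero vs) :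
    ws = vs := by
  rw [joinZero_eq_intercalate, joinZero_eq_intercalate] at h
  rw [← List.splitOn_intercalate 0 hws0 hws, h, List.splitOn_intercalate 0 hvs0 hvs]

theorem joinZero_append_three_inj {ws us vs xs : List (List (Fin 4))}
    (hws : ws ≠ []) (hus : us ≠ []) (hvs : vs ≠ []) (hxs : xs ≠ [])
    (hws0 : ∀ w ∈ ws, 0 ∉ w) (hus0 : ∀ u ∈ us, 0 ∉ u)
    (hvs0 : ∀ v ∈ vs, 0 ∉ v) (hxs0 : ∀ x ∈ xs, 0 ∉ x)
    (hws3 : ∀ w ∈ ws, 3 ∉ w) (hus3 : ∀ u ∈ us, 3 ∉ u)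
    (h : joinZero ws ++ [3] ++ joinZero us = joinZero vs ++ [3] ++ joinZero xs) :
    ws = vs ∧ us = xs := by
  simp only [List.append_assoc, List.singleton_append] at h
  obtain ⟨hwv, -, hux⟩ := (List.append_cons_inj_of_notMem
    (notMem_joinZero (by decide) hws3) (notMem_joinZero (by decide) hus3)).mp h
  exact ⟨joinZero_inj hws hvs hws0 hvs0 hwv, joinZero_inj hus hxs hus0 hxs0 hux⟩

theorem notMem_of_forall_eq_one_or_two {x : Fin 4} (hx1 : x ≠ 1) (hx2 : x ≠ 2)
    {ws : List (List (Fin 4))} (h : ∀ w ∈ ws, ∀ a ∈ w, a = 1 ∨ a = 2) : ∀ w ∈ ws, x ∉ w :=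
  fun w hw hxw => (h w hw x hxw).elim hx1 hx2

theorem stmt_15 (t z : ℕ) (ht : 1 ≤ t) (hz : 1 ≤ z)
    (ws ws' : List (List (Fin 4)))
    (hlen : ws.length = t) (hlen' : ws'.length = z)
    (hws : ∀ w ∈ ws, ∀ a ∈ w, a = 1 ∨ a = 2)
    (hws' : ∀ w ∈ ws', ∀ a ∈ w, a = 1 ∨ a = 2) :
    (joinZero ws ++ [3] ++ joinZero ws'.reverse) ∈ MANYTWINS ↔ (t = z ∧ ws = ws') := by
  have no0 {us : List (List (Fin 4))} : (∀ w ∈ us, ∀ a ∈ w, a = 1 ∨ a = 2) → ∀ w ∈ us, 0 ∉ w :=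
    notMem_of_forall_eq_one_or_two (by decide) (by decide)
  have no3 {us : List (List (Fin 4))} : (∀ w ∈ us, ∀ a ∈ w, a = 1 ∨ a = 2) → ∀ w ∈ us, 3 ∉ w :=
    notMem_of_forall_eq_one_or_two (by decide) (by decide)
  have hrev : ∀ w ∈ ws'.reverse, ∀ a ∈ w, a = 1 ∨ a = 2 :=
    fun w hw => hws' w (List.mem_reverse.mp hw)
  have hne : ws ≠ [] := List.ne_nil_of_length_pos (by omega)
  have hne' : ws'.reverse ≠ [] := List.ne_nil_of_length_pos (by rw [List.length_reverse]; omega)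
  constructor
  · rintro ⟨s, hs, vs, rfl, hvs, h⟩
    have hvs_rev : ∀ w ∈ vs.reverse, ∀ a ∈ w, a = 1 ∨ a = 2 :=
      fun w hw => hvs w (List.mem_reverse.mp hw)
    have hvs_ne : vs ≠ [] := List.ne_nil_of_length_pos hs
    obtain ⟨hwv, hwv'⟩ := joinZero_append_three_inj hne hne' hvs_ne
      (List.reverse_ne_nil_iff.mpr hvs_ne) (no0 hws) (no0 hrev) (no0 hvs) (no0 hvs_rev)
      (no3 hws) (no3 hrev) h
    have hws_eq : ws = ws' := hwv.trans (List.reverse_injective hwv').symm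
    exact ⟨hlen ▸ hlen' ▸ congrArg List.length hws_eq, hws_eq⟩
  · rintro ⟨-, rfl⟩
    exact ⟨t, ht, ws, hlen, hws, rfl⟩
end
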